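/- arXiv:2008.13727 — 2 statements merged into one kernel-verified Lean document; each statement's English description precedes it below -/
import Mathlib

section
/- The normed space (SV_d(X), ‖·‖_{SV_d}) is separable: it contains a countable dense subset (namely the local functions taking only rational values). -/
open MeasureTheory Filter Topology

/-- The full shift configuration space `𝒜^{ℤ^d}`. -/
abbrev Config (d : ℕ) (A : Type*) := (Fin d → ℤ) → A

/-- The shift action of `ℤ^d`: `(T^k x)_i = x_{i+k}`. -/
def shift {d : ℕ} {A : Type*} (k : Fin d → ℤ) (x : Config d A) : Config d A :=
  fun i => x (i + k)

/-- The ℓ∞ norm of a lattice point, `‖k‖_∞ = max_i |k_i|`. -/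
def normInf {d : ℕ} (k : Fin d → ℤ) : ℕ :=
  Finset.univ.sup fun i => (k i).natAbs

/-- The box `Λ_N = {k : ‖k‖_∞ ≤ N}` as a finset. -/
noncomputable def boxF (d N : ℕ) : Finset (Fin d → ℤ) :=
  Finset.Icc (fun _ => -(N : ℤ)) (fun _ => (N : ℤ))

/-- The `n`-th variation of `f` on a subshift `X`:
`δ_n(f) = sup {|f x - f y| : x, y ∈ X, x_{Λ_n} = y_{Λ_n}}`. -/
noncomputable def deltaVar {d : ℕ} {A : Type*} (X : Set (Config d A))
    (f : Config d A → ℝ) (n : ℕ) : ℝ :=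
  sSup {r : ℝ | ∃ x ∈ X, ∃ y ∈ X,
    (∀ k : Fin d → ℤ, normInf k ≤ n → x k = y k) ∧ r = |f x - f y|}

/-- `f` is bounded on `X`. -/
def BoundedOn {d : ℕ} {A : Type*} (X : Set (Config d A)) (f : Config d A → ℝ) : Prop :=
  ∃ C : ℝ, ∀ x ∈ X, |f x| ≤ C

/-- Membership in `SV_d(X)`: bounded with `Σ_{n ≥ 1} n^{d-1} δ_n(f) < ∞`. -/
def MemSV (d : ℕ) {A : Type*} (X : Set (Config d A)) (f : Config d A → ℝ) : Prop :=
  BoundedOn X f ∧ Summable fun n : ℕ => ((n : ℝ) + 1) ^ (d - 1) * deltaVar X f (n + 1)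

/-- The sup norm of `f` over `X`. -/
noncomputable def supNormOn {d : ℕ} {A : Type*} (X : Set (Config d A))
    (f : Config d A → ℝ) : ℝ :=
  sSup {r : ℝ | ∃ x ∈ X, r = |f x|}

/-- The `SV_d` norm: `‖f‖_{SV_d} = ‖f‖_∞ + Σ_{n ≥ 1} n^{d-1} δ_n(f)`. -/
noncomputable def svNorm (d : ℕ) {A : Type*} (X : Set (Config d A))
    (f : Config d A → ℝ) : ℝ :=
  supNormOn X f + ∑' n : ℕ, ((n : ℝ) + 1) ^ (d - 1) * deltaVar X f (n + 1)

/-- The Gibbs relation `𝔗`: pairs of points of `X` that agree outside a finite set. -/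
def gibbsRel {d : ℕ} {A : Type*} (X : Set (Config d A)) :
    Set (Config d A × Config d A) :=
  {p | p.1 ∈ X ∧ p.2 ∈ X ∧ ∃ Λ : Finset (Fin d → ℤ), ∀ k ∉ Λ, p.1 k = p.2 k}

/-- The cocycle `φ_f(x,y) = Σ_{k ∈ ℤ^d} (f(T^k y) - f(T^k x))` (unordered sum). -/
noncomputable def phiF {d : ℕ} {A : Type*} (f : Config d A → ℝ)
    (x y : Config d A) : ℝ :=
  ∑' k : Fin d → ℤ, (f (shift k y) - f (shift k x))

/-- Membership in `𝓕(X)`: homeomorphisms of `X` changing only finitely many coordinates,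
uniformly. -/
def memF {d : ℕ} {A : Type*} [TopologicalSpace A] (X : Set (Config d A))
    (φ : ↥X ≃ₜ ↥X) : Prop :=
  ∃ n : ℕ, 1 ≤ n ∧ ∀ x : ↥X, ∀ k : Fin d → ℤ, n < normInf k → (φ x).1 k = x.1 k

/-- `𝓕_n(X)`. -/
def Fn {d : ℕ} {A : Type*} [TopologicalSpace A] (X : Set (Config d A)) (n : ℕ) :
    Set (↥X ≃ₜ ↥X) :=
  {φ | (∀ x : ↥X, ∀ k : Fin d → ℤ, n < normInf k → (φ x).1 k = x.1 k) ∧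
    ∀ x y : ↥X,
      ((∀ k : Fin d → ℤ, normInf k ≤ n → x.1 k = y.1 k) ↔
        (∀ k : Fin d → ℤ, normInf k ≤ n → (φ x).1 k = (φ y).1 k))}

/-- The configuration `ω x_{Λ^c}`: equal to `ω` on `Λ` and to `x` off `Λ`. -/
def patch {d : ℕ} {A : Type*} (Λ : Finset (Fin d → ℤ)) (ω : {k // k ∈ Λ} → A)
    (x : Config d A) : Config d A :=
  fun k => if h : k ∈ Λ then ω ⟨k, h⟩ else x k

/-- `f_n = Σ_{i ∈ Λ_n} f ∘ T^i`. -/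
noncomputable def fnSum (d : ℕ) {A : Type*} (f : Config d A → ℝ) (n : ℕ)
    (z : Config d A) : ℝ :=
  ∑ i ∈ boxF d n, f (shift i z)

/-- The σ-algebra `𝓕_Δ` on `X`, generated by the coordinate projections `x ↦ x_i`, `i ∈ Δ`. -/
def cylSigma {d : ℕ} {A : Type*} [MeasurableSpace A] (X : Set (Config d A))
    (Δ : Set (Fin d → ℤ)) : MeasurableSpace ↥X :=
  MeasurableSpace.comap (fun (x : ↥X) (i : ↥Δ) => x.1 i.1) MeasurableSpace.pi

/-- `μ` is a Gibbs measure for `f`: `(φ_f, 𝔗)`-conformal. -/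
def IsGibbs (d : ℕ) {A : Type*} [MeasurableSpace A] (X : Set (Config d A))
    (f : Config d A → ℝ) (μ : Measure ↥X) : Prop :=
  ∀ V W : ↥X → ↥X, Measurable V → Measurable W →
    (∀ x, W (V x) = x) → (∀ x, V (W x) = x) →
    (∀ x : ↥X, ((x.1, (V x).1) ∈ gibbsRel X)) →
    (Measure.map V μ ≪ μ ∧
      ∀ᵐ x ∂μ, (Measure.map V μ).rnDeriv μ x
        = ENNReal.ofReal (Real.exp (phiF f x.1 (W x).1)))

/-- `μ` is a topological Gibbs measure for `f`: `(φ_f|_{𝔗⁰}, 𝔗⁰)`-conformal. -/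
def IsTopGibbs (d : ℕ) {A : Type*} [TopologicalSpace A] [MeasurableSpace A]
    (X : Set (Config d A)) (f : Config d A → ℝ) (μ : Measure ↥X) : Prop :=
  ∀ φ : ↥X ≃ₜ ↥X, memF X φ →
    (Measure.map (⇑φ) μ ≪ μ ∧
      ∀ᵐ x ∂μ, (Measure.map (⇑φ) μ).rnDeriv μ x
        = ENNReal.ofReal (Real.exp (phiF f x.1 (φ.symm x).1)))

/-- Finite-volume Gibbsian ratios defining the kernel `γ_Λ`. -/
noncomputable def gammaFn (d : ℕ) {A : Type*} [Fintype A] (X : Set (Config d A))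
    (f : Config d A → ℝ) (Λ : Finset (Fin d → ℤ)) (S : Set ↥X) (x : Config d A)
    (n : ℕ) : ℝ :=
  (∑ ω : {k // k ∈ Λ} → A,
      (Subtype.val '' S).indicator (fun z => Real.exp (fnSum d f n z)) (patch Λ ω x)) /
  (∑ η : {k // k ∈ Λ} → A,
      X.indicator (fun z => Real.exp (fnSum d f n z)) (patch Λ η x))

/-- The kernel `γ_Λ(S | x)`, defined as the limit of the finite-volume ratios. -/
noncomputable def gamma (d : ℕ) {A : Type*} [Fintype A] (X : Set (Config d A))
    (f : Config d A → ℝ) (Λ : Finset (Fin d → ℤ)) (S : Set ↥X) (x : Config d A) : ℝ :=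
  limUnder atTop (gammaFn d X f Λ S x)

/-- `X` is a subshift of finite type. -/
def IsSFT {d : ℕ} {A : Type*} (X : Set (Config d A)) : Prop :=
  ∃ n : ℕ, 1 ≤ n ∧ ∃ F : Set ({k : Fin d → ℤ // normInf k ≤ n} → A),
    X = {x : Config d A |
      ∀ l : Fin d → ℤ, (fun k : {k : Fin d → ℤ // normInf k ≤ n} => shift l x k.1) ∉ F}

/-- The topological Gibbs relation `𝔗⁰`. -/
def topGibbsRel {d : ℕ} {A : Type*} [TopologicalSpace A] (X : Set (Config d A)) :
    Set (Config d A × Config d A) :=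
  {p | ∃ (hx : p.1 ∈ X) (φ : ↥X ≃ₜ ↥X), memF X φ ∧ (φ ⟨p.1, hx⟩).1 = p.2}

/-- `f` is a local function on `X`. -/
def IsLocal {d : ℕ} {A : Type*} (X : Set (Config d A)) (f : Config d A → ℝ) : Prop :=
  ∃ Λ : Finset (Fin d → ℤ), ∀ x ∈ X, ∀ y ∈ X, (∀ k ∈ Λ, x k = y k) → f x = f y

/-
Approximate `f ∈ SV_d(X)` in two steps. First replace `f` by `f_M(x) = f(z)`, where `z ∈ X` is a
chosen point with the same restriction to `Λ_M` as `x`. Then `‖f - f_M‖_∞ ≤ δ_M(f)` and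
`δ_n(f_M) ≤ δ_n(f)`, so `δ_n(f - f_M) ≤ 2 min(δ_M(f), δ_n(f))`, and dominated convergence for
series (with dominating sequence `2 n^{d-1} δ_n(f)`) gives `‖f - f_M‖_{SV_d} → 0` as `M → ∞`.
Second, `f_M` depends only on the finitely many patterns on `Λ_M`, so rounding its values to
nearby rationals moves it very little in `SV_d`-norm; rational-valued local functions form a
countable set.
-/

theorem mem_boxF_iff {d N : ℕ} {k : Fin d → ℤ} : k ∈ boxF d N ↔ normInf k ≤ N := by
  simp only [boxF, Finset.mem_Icc, normInf, Finset.sup_le_iff, Finset.mem_univ, true_implies,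
    Pi.le_def, ← forall_and]
  exact forall_congr' fun i => by omega

section Variation

variable {d : ℕ} {A : Type*} {X : Set (Config d A)} {f g : Config d A → ℝ}

theorem deltaVar_nonneg (X : Set (Config d A)) (f : Config d A → ℝ) (n : ℕ) :
    0 ≤ deltaVar X f n :=
  Real.sSup_nonneg <| by rintro r ⟨x, -, y, -, -, rfl⟩; exact abs_nonneg _

theorem deltaVar_le {n : ℕ} {c : ℝ} (hc : 0 ≤ c)
    (h : ∀ x ∈ X, ∀ y ∈ X, (∀ k, normInf k ≤ n → x k = y k) → |f x - f y| ≤ c) :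
    deltaVar X f n ≤ c :=
  Real.sSup_le (by rintro r ⟨x, hx, y, hy, hxy, rfl⟩; exact h x hx y hy hxy) hc

theorem deltaVar_le_two_mul {n : ℕ} {c : ℝ} (hc : 0 ≤ c) (h : ∀ x ∈ X, |f x| ≤ c) :
    deltaVar X f n ≤ 2 * c :=
  deltaVar_le (by positivity) fun x hx y hy _ => by
    linarith [abs_sub (f x) (f y), h x hx, h y hy]

theorem BoundedOn.abs_sub_le_deltaVar (hf : BoundedOn X f) {n : ℕ} {x y : Config d A}
    (hx : x ∈ X) (hy : y ∈ X) (hxy : ∀ k, normInf k ≤ n → x k = y k) :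
    |f x - f y| ≤ deltaVar X f n := by
  obtain ⟨C, hC⟩ := hf
  refine le_csSup ⟨2 * C, ?_⟩ ⟨x, hx, y, hy, hxy, rfl⟩
  rintro r ⟨a, ha, b, hb, -, rfl⟩
  linarith [abs_sub (f a) (f b), hC a ha, hC b hb]

theorem supNormOn_nonneg (X : Set (Config d A)) (f : Config d A → ℝ) : 0 ≤ supNormOn X f :=
  Real.sSup_nonneg <| by rintro r ⟨x, -, rfl⟩; exact abs_nonneg _

theorem supNormOn_le {c : ℝ} (hc : 0 ≤ c) (h : ∀ x ∈ X, |f x| ≤ c) : supNormOn X f ≤ c :=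
  Real.sSup_le (by rintro r ⟨x, hx, rfl⟩; exact h x hx) hc

theorem BoundedOn.abs_le_supNormOn (hf : BoundedOn X f) {x : Config d A} (hx : x ∈ X) :
    |f x| ≤ supNormOn X f := by
  obtain ⟨C, hC⟩ := hf
  exact le_csSup ⟨C, by rintro r ⟨y, hy, rfl⟩; exact hC y hy⟩ ⟨x, hx, rfl⟩

theorem BoundedOn.add (hf : BoundedOn X f) (hg : BoundedOn X g) :
    BoundedOn X fun x => f x + g x := by
  obtain ⟨C, hC⟩ := hf
  obtain ⟨D, hD⟩ := hg
  exact ⟨C + D, fun x hx => (abs_add_le _ _).trans (add_le_add (hC x hx) (hD x hx))⟩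

theorem BoundedOn.neg (hf : BoundedOn X f) : BoundedOn X fun x => -f x := by
  simpa only [BoundedOn, abs_neg] using hf

theorem deltaVar_add_le (hf : BoundedOn X f) (hg : BoundedOn X g) (n : ℕ) :
    deltaVar X (fun x => f x + g x) n ≤ deltaVar X f n + deltaVar X g n := by
  refine deltaVar_le (add_nonneg (deltaVar_nonneg X f n) (deltaVar_nonneg X g n))
    fun x hx y hy hxy => ?_
  calc |f x + g x - (f y + g y)| = |(f x - f y) + (g x - g y)| := by ring_nf
    _ ≤ |f x - f y| + |g x - g y| := abs_add_le _ _
    _ ≤ deltaVar X f n + deltaVar X g n :=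
      add_le_add (hf.abs_sub_le_deltaVar hx hy hxy) (hg.abs_sub_le_deltaVar hx hy hxy)

theorem deltaVar_neg (n : ℕ) : deltaVar X (fun x => -f x) n = deltaVar X f n := by
  simp only [deltaVar, neg_sub_neg, abs_sub_comm]

theorem MemSV.add (hf : MemSV d X f) (hg : MemSV d X g) : MemSV d X fun x => f x + g x :=
  ⟨hf.1.add hg.1, (hf.2.add hg.2).of_nonneg_of_le
    (fun n => mul_nonneg (by positivity) (deltaVar_nonneg X _ _))
    fun n => by rw [← mul_add]; gcongr; exact deltaVar_add_le hf.1 hg.1 _⟩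

theorem MemSV.neg (hf : MemSV d X f) : MemSV d X fun x => -f x :=
  ⟨hf.1.neg, by simpa only [deltaVar_neg] using hf.2⟩

theorem MemSV.sub (hf : MemSV d X f) (hg : MemSV d X g) : MemSV d X fun x => f x - g x := by
  simpa only [sub_eq_add_neg] using hf.add hg.neg

theorem svNorm_nonneg (X : Set (Config d A)) (f : Config d A → ℝ) : 0 ≤ svNorm d X f :=
  add_nonneg (supNormOn_nonneg X f)
    (tsum_nonneg fun n => mul_nonneg (by positivity) (deltaVar_nonneg X f _))

theorem svNorm_add_le (hf : MemSV d X f) (hg : MemSV d X g) :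
    svNorm d X (fun x => f x + g x) ≤ svNorm d X f + svNorm d X g := by
  have hsup : supNormOn X (fun x => f x + g x) ≤ supNormOn X f + supNormOn X g :=
    supNormOn_le (add_nonneg (supNormOn_nonneg X f) (supNormOn_nonneg X g)) fun x hx =>
      (abs_add_le _ _).trans (add_le_add (hf.1.abs_le_supNormOn hx) (hg.1.abs_le_supNormOn hx))
  have hsum : ∑' n : ℕ, ((n : ℝ) + 1) ^ (d - 1) * deltaVar X (fun x => f x + g x) (n + 1) ≤
      ∑' n : ℕ, ((n : ℝ) + 1) ^ (d - 1) * deltaVar X f (n + 1) +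
        ∑' n : ℕ, ((n : ℝ) + 1) ^ (d - 1) * deltaVar X g (n + 1) := by
    rw [← hf.2.tsum_add hg.2]
    refine (hf.add hg).2.tsum_le_tsum (fun n => ?_) (hf.2.add hg.2)
    rw [← mul_add]
    gcongr
    exact deltaVar_add_le hf.1 hg.1 _
  unfold svNorm
  linarith

theorem MemSV.tendsto_deltaVar (hf : MemSV d X f) : Tendsto (deltaVar X f) atTop (𝓝 0) := by
  rw [← Filter.tendsto_add_atTop_iff_nat 1]
  refine squeeze_zero (fun n => deltaVar_nonneg X f _) (fun n => ?_) hf.2.tendsto_atTop_zero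
  exact le_mul_of_one_le_left (deltaVar_nonneg X f _)
    (one_le_pow₀ (le_add_of_nonneg_left n.cast_nonneg))

end Variation

section Local

variable {d : ℕ} {A : Type*} {X : Set (Config d A)} {M : ℕ}

def restrictBox (M : ℕ) (x : Config d A) : boxF d M → A := fun k => x k

theorem restrictBox_eq_of_agree {n : ℕ} (hMn : M ≤ n) {x y : Config d A}
    (hxy : ∀ k, normInf k ≤ n → x k = y k) : restrictBox M x = restrictBox M y :=
  funext fun k => hxy k ((mem_boxF_iff.1 k.2).trans hMn)

theorem deltaVar_comp_restrictBox_eq_zero (r : (boxF d M → A) → ℝ) {n : ℕ} (hMn : M ≤ n) :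
    deltaVar X (fun x => r (restrictBox M x)) n = 0 :=
  le_antisymm (deltaVar_le le_rfl fun x _ y _ hxy => by
    rw [restrictBox_eq_of_agree hMn hxy, sub_self, abs_zero]) (deltaVar_nonneg X _ n)

theorem summable_deltaVar_comp_restrictBox (r : (boxF d M → A) → ℝ) :
    Summable fun n : ℕ =>
      ((n : ℝ) + 1) ^ (d - 1) * deltaVar X (fun x => r (restrictBox M x)) (n + 1) :=
  summable_of_ne_finset_zero (s := Finset.range M) fun n hn => by
    rw [deltaVar_comp_restrictBox_eq_zero r (by simp at hn; omega), mul_zero]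

theorem memSV_comp_restrictBox [Finite A] (r : (boxF d M → A) → ℝ) :
    MemSV d X fun x => r (restrictBox M x) := by
  obtain ⟨C, hC⟩ := (Set.finite_range fun p => |r p|).bddAbove
  exact ⟨⟨C, fun x _ => hC ⟨_, rfl⟩⟩, summable_deltaVar_comp_restrictBox r⟩

theorem svNorm_comp_restrictBox_le (r : (boxF d M → A) → ℝ) {η : ℝ} (hη : 0 ≤ η)
    (hr : ∀ p, |r p| ≤ η) :
    svNorm d X (fun x => r (restrictBox M x)) ≤
      η * (1 + 2 * ∑ n ∈ Finset.range M, ((n : ℝ) + 1) ^ (d - 1)) := by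
  have hsup : supNormOn X (fun x => r (restrictBox M x)) ≤ η :=
    supNormOn_le hη fun x _ => hr _
  have hsum :
      ∑' n : ℕ, ((n : ℝ) + 1) ^ (d - 1) * deltaVar X (fun x => r (restrictBox M x)) (n + 1) ≤
        ∑ n ∈ Finset.range M, ((n : ℝ) + 1) ^ (d - 1) * (2 * η) := by
    rw [tsum_eq_sum (s := Finset.range M) fun n hn => by
      rw [deltaVar_comp_restrictBox_eq_zero r (by simp at hn; omega), mul_zero]]
    gcongr
    exact deltaVar_le_two_mul hη fun x _ => hr _
  rw [← Finset.sum_mul] at hsum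
  unfold svNorm
  linarith

theorem exists_rat_svNorm_sub_lt (r : (boxF d M → A) → ℝ) {ε : ℝ} (hε : 0 < ε) :
    ∃ q : (boxF d M → A) → ℚ,
      svNorm d X (fun x => r (restrictBox M x) - q (restrictBox M x)) < ε := by
  set K := 1 + 2 * ∑ n ∈ Finset.range M, ((n : ℝ) + 1) ^ (d - 1)
  have hK : 0 < K := by positivity
  have hη : 0 < ε / (2 * K) := by positivity
  choose q hq using fun p => exists_rat_near (r p) hη
  refine ⟨q, (svNorm_comp_restrictBox_le (fun p => r p - q p) hη.le fun p => (hq p).le).trans_lt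
    ?_⟩
  rw [div_mul_eq_mul_div, mul_div_mul_right _ _ hK.ne']
  linarith

end Local

section Localize

variable {d : ℕ} {A : Type*} [Nonempty A] {X : Set (Config d A)} {M : ℕ} {f : Config d A → ℝ}

noncomputable def cylRep (X : Set (Config d A)) (M : ℕ) (p : boxF d M → A) : Config d A :=
  Classical.epsilon fun z => z ∈ X ∧ restrictBox M z = p

theorem cylRep_spec {x : Config d A} (hx : x ∈ X) :
    cylRep X M (restrictBox M x) ∈ X ∧
      restrictBox M (cylRep X M (restrictBox M x)) = restrictBox M x :=
  Classical.epsilon_spec (p := fun z => z ∈ X ∧ restrictBox M z = restrictBox M x) ⟨x, hx, rfl⟩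

theorem cylRep_agree {x : Config d A} (hx : x ∈ X) {k : Fin d → ℤ} (hk : normInf k ≤ M) :
    cylRep X M (restrictBox M x) k = x k :=
  congrFun (cylRep_spec hx).2 ⟨k, mem_boxF_iff.2 hk⟩

noncomputable def localize (X : Set (Config d A)) (M : ℕ) (f : Config d A → ℝ) :
    Config d A → ℝ :=
  fun x => f (cylRep X M (restrictBox M x))

theorem boundedOn_localize (hf : BoundedOn X f) : BoundedOn X (localize X M f) := by
  obtain ⟨C, hC⟩ := hf
  exact ⟨C, fun x hx => hC _ (cylRep_spec hx).1⟩

theorem memSV_localize (hf : MemSV d X f) : MemSV d X (localize X M f) :=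
  ⟨boundedOn_localize hf.1, summable_deltaVar_comp_restrictBox fun p => f (cylRep X M p)⟩

theorem abs_sub_localize_le (hf : BoundedOn X f) {x : Config d A} (hx : x ∈ X) :
    |f x - localize X M f x| ≤ deltaVar X f M :=
  hf.abs_sub_le_deltaVar hx (cylRep_spec hx).1 fun _ hk => (cylRep_agree hx hk).symm

theorem deltaVar_localize_le (hf : BoundedOn X f) (n : ℕ) :
    deltaVar X (localize X M f) n ≤ deltaVar X f n := by
  rcases le_total M n with hMn | hnM
  · exact (deltaVar_comp_restrictBox_eq_zero (fun p => f (cylRep X M p)) hMn).trans_le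
      (deltaVar_nonneg X f n)
  refine deltaVar_le (deltaVar_nonneg X f n) fun x hx y hy hxy => ?_
  refine hf.abs_sub_le_deltaVar (cylRep_spec hx).1 (cylRep_spec hy).1 fun k hk => ?_
  rw [cylRep_agree hx (hk.trans hnM), cylRep_agree hy (hk.trans hnM), hxy k hk]

theorem deltaVar_sub_localize_le (hf : BoundedOn X f) (n : ℕ) :
    deltaVar X (fun x => f x - localize X M f x) n ≤
      2 * min (deltaVar X f M) (deltaVar X f n) := by
  rw [mul_min_of_nonneg _ _ zero_le_two]
  refine le_min (deltaVar_le_two_mul (deltaVar_nonneg X f M) fun x hx =>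
    abs_sub_localize_le hf hx) ?_
  calc deltaVar X (fun x => f x - localize X M f x) n
      ≤ deltaVar X f n + deltaVar X (fun x => -localize X M f x) n := by
        simpa only [sub_eq_add_neg] using deltaVar_add_le hf (boundedOn_localize hf).neg n
    _ ≤ 2 * deltaVar X f n := by
        rw [deltaVar_neg]
        linarith [deltaVar_localize_le (M := M) hf n]

theorem tendsto_svNorm_sub_localize (hf : MemSV d X f) :
    Tendsto (fun M => svNorm d X fun x => f x - localize X M f x) atTop (𝓝 0) := by
  set w : ℕ → ℝ := fun n => ((n : ℝ) + 1) ^ (d - 1)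
  have hw : ∀ n, 0 ≤ w n := fun n => by positivity
  have hmin : ∀ M n, 0 ≤ w n * (2 * min (deltaVar X f M) (deltaVar X f (n + 1))) := fun M n =>
    mul_nonneg (hw n) <| mul_nonneg zero_le_two <|
      le_min (deltaVar_nonneg X f M) (deltaVar_nonneg X f _)
  have hδ := hf.tendsto_deltaVar
  have hbound : Tendsto (fun M => deltaVar X f M +
      ∑' n, w n * (2 * min (deltaVar X f M) (deltaVar X f (n + 1)))) atTop (𝓝 0) := by
    have hterms := tendsto_tsum_of_dominated_convergence (𝓕 := atTop)
      (f := fun M n => w n * (2 * min (deltaVar X f M) (deltaVar X f (n + 1))))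
      (g := fun _ => 0) (hf.2.mul_left 2)
      (fun n => by
        simpa [min_eq_left (deltaVar_nonneg X f (n + 1))] using
          ((hδ.min (tendsto_const_nhds (x := deltaVar X f (n + 1)))).const_mul 2).const_mul (w n))
      (Eventually.of_forall fun M n => by
        rw [Real.norm_of_nonneg (hmin M n), mul_left_comm]
        gcongr
        exact min_le_right _ _)
    simpa using hδ.add hterms
  refine squeeze_zero (fun M => svNorm_nonneg X _) (fun M => add_le_add ?_ ?_) hbound
  · exact supNormOn_le (deltaVar_nonneg X f M) fun x hx => abs_sub_localize_le hf.1 hx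
  · refine (hf.sub (memSV_localize hf)).2.tsum_le_tsum (fun n => ?_) ?_
    · gcongr
      exact deltaVar_sub_localize_le hf.1 _
    · refine (hf.2.mul_left 2).of_nonneg_of_le (hmin M) fun n => ?_
      rw [mul_left_comm]
      gcongr
      exact min_le_right _ _

end Localize

theorem SV_separable_general {d : ℕ} {A : Type*} [Fintype A] [Nonempty A]
    (X : Set (Config d A)) :
    ∃ D : Set (Config d A → ℝ), D.Countable ∧ (∀ g ∈ D, MemSV d X g) ∧
      ∀ f : Config d A → ℝ, MemSV d X f → ∀ ε : ℝ, 0 < ε →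
        ∃ g ∈ D, svNorm d X (fun x => f x - g x) < ε := by
  refine ⟨⋃ M : ℕ, Set.range fun q : (boxF d M → A) → ℚ => fun x => (q (restrictBox M x) : ℝ),
    Set.countable_iUnion fun M => Set.countable_range (ι := (boxF d M → A) → ℚ) _, ?_, ?_⟩
  · simp only [Set.mem_iUnion, Set.mem_range]
    rintro g ⟨M, q, rfl⟩
    exact memSV_comp_restrictBox fun p => (q p : ℝ)
  intro f hf ε hε
  obtain ⟨M, hM⟩ :=
    ((tendsto_svNorm_sub_localize hf).eventually (gt_mem_nhds (half_pos hε))).exists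
  obtain ⟨q, hq⟩ := exists_rat_svNorm_sub_lt (X := X) (fun p => f (cylRep X M p)) (half_pos hε)
  replace hq : svNorm d X (fun x => localize X M f x - q (restrictBox M x)) < ε / 2 := hq
  refine ⟨_, Set.mem_iUnion.2 ⟨M, q, rfl⟩, ?_⟩
  calc svNorm d X (fun x => f x - q (restrictBox M x))
      = svNorm d X fun x => (f x - localize X M f x) +
          (localize X M f x - q (restrictBox M x)) := by simp only [sub_add_sub_cancel]
    _ ≤ svNorm d X (fun x => f x - localize X M f x) +
          svNorm d X (fun x => localize X M f x - q (restrictBox M x)) :=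
        svNorm_add_le (hf.sub (memSV_localize hf))
          ((memSV_localize hf).sub (memSV_comp_restrictBox fun p => (q p : ℝ)))
    _ < ε := by linarith

/-- `(SV_d(X), ‖·‖_{SV_d})` is separable: it contains a countable dense
subset. -/
theorem SV_separable {d : ℕ} (hd : 1 ≤ d) {A : Type*} [Fintype A] [Nonempty A]
    [TopologicalSpace A] [DiscreteTopology A]
    (X : Set (Config d A)) (hne : X.Nonempty) (hcl : IsClosed X)
    (hinv : ∀ k : Fin d → ℤ, ∀ x ∈ X, shift k x ∈ X) :
    ∃ D : Set (Config d A → ℝ), D.Countable ∧ (∀ g ∈ D, MemSV d X g) ∧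
      ∀ f : Config d A → ℝ, MemSV d X f → ∀ ε : ℝ, 0 < ε →
        ∃ g ∈ D, svNorm d X (fun x => f x - g x) < ε :=
  SV_separable_general X
end

section
/- Let φ ∈ 𝓕(X). Then there exists a positive integer n such that: (a) φ(x) agrees with x on Λ_n^c for every x ∈ X, and (b) for all x, y ∈ X, x_{Λ_n} = y_{Λ_n} if and only if φ(x)_{Λ_n} = φ(y)_{Λ_n}. -/
open MeasureTheory Filter Topology

/-! A coordinate of a continuous self-map of the compact space `X` is locally constant, so by
compactness it depends, uniformly on `X`, on finitely many coordinates. Hence `φ(x)_{Λ_m}` is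
determined by `x_{Λ_N}` for some `N ≥ m`; outside `Λ_m` the map `φ` is the identity, so
`φ(x)_{Λ_n}` is determined by `x_{Λ_n}` for all `n ≥ N`. The same for `φ⁻¹` gives the
converse. -/

lemma mem_boxF {d n : ℕ} {k : Fin d → ℤ} : k ∈ boxF d n ↔ normInf k ≤ n := by
  simp only [boxF, Finset.mem_Icc, Pi.le_def, normInf, Finset.sup_le_iff, Finset.mem_univ,
    forall_true_left]
  constructor
  · rintro ⟨hlow, hup⟩ i
    have := hlow i
    have := hup i
    omega
  · intro h
    exact ⟨fun i => by have := h i; omega, fun i => by have := h i; omega⟩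

lemma finite_setOf_normInf_le (d n : ℕ) : {k : Fin d → ℤ | normInf k ≤ n}.Finite :=
  (boxF d n).finite_toSet.subset fun _ hk => mem_boxF.2 hk

section Cylinder

variable {ι A B : Type*} [TopologicalSpace A] {X : Set (ι → A)}

lemma isOpen_setOf_eqOn [DiscreteTopology A] (I : Finset ι) (x : ι → A) :
    IsOpen {y : X | Set.EqOn y.1 x I} :=
  (isOpen_set_pi I.finite_toSet fun i _ => isOpen_discrete {x i}).preimage continuous_subtype_val

lemma exists_finset_eq_of_eqOn_of_mem_nhds {f : X → B} {x : X} (hf : f ⁻¹' {f x} ∈ 𝓝 x) :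
    ∃ I : Finset ι, ∀ y : X, Set.EqOn y.1 x.1 I → f y = f x := by
  rw [nhds_subtype, Filter.mem_comap, nhds_pi] at hf
  obtain ⟨s, hs, hsf⟩ := hf
  obtain ⟨I, t, ht, hts⟩ := Filter.mem_pi'.1 hs
  refine ⟨I, fun y hy => hsf (hts fun i hi => ?_)⟩
  rw [hy hi]
  exact mem_of_mem_nhds (ht i)

lemma Continuous.exists_finset_eq_of_eqOn [DiscreteTopology A] [CompactSpace X]
    [TopologicalSpace B] [DiscreteTopology B] {f : X → B} (hf : Continuous f) :
    ∃ I : Finset ι, ∀ x y : X, Set.EqOn x.1 y.1 I → f x = f y := by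
  classical
  have hloc (x : X) := exists_finset_eq_of_eqOn_of_mem_nhds
    (hf.continuousAt.preimage_mem_nhds ((isOpen_discrete {f x}).mem_nhds rfl))
  choose I hI using hloc
  obtain ⟨t, ht⟩ := CompactSpace.elim_nhds_subcover (fun x => {y : X | Set.EqOn y.1 x.1 (I x)})
    fun x => (isOpen_setOf_eqOn (I x) x.1).mem_nhds fun _ _ => rfl
  refine ⟨t.biUnion I, fun x y hxy => ?_⟩
  have hx : x ∈ ⋃ z ∈ t, {y : X | Set.EqOn y.1 z.1 (I z)} := ht ▸ trivial
  obtain ⟨z, hz, hxz⟩ := Set.mem_iUnion₂.1 hx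
  have hIz : (I z : Set ι) ⊆ t.biUnion I := fun i hi => Finset.mem_biUnion.2 ⟨z, hz, hi⟩
  have hyz : Set.EqOn y.1 z.1 (I z) := fun i hi => (hxy (hIz hi)).symm.trans (hxz hi)
  rw [hI z x hxz, hI z y hyz]

end Cylinder

lemma exists_eqOn_box_of_continuous {d : ℕ} {A : Type*} [Finite A] [TopologicalSpace A]
    [DiscreteTopology A] {X : Set (Config d A)} (hX : IsClosed X) {Φ : X → X}
    (hΦ : Continuous Φ) (m : ℕ) :
    ∃ N, m ≤ N ∧ ∀ x y : X, Set.EqOn x.1 y.1 {k | normInf k ≤ N} →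
      Set.EqOn (Φ x).1 (Φ y).1 {k | normInf k ≤ m} := by
  have : CompactSpace X := isCompact_iff_compactSpace.1 hX.isCompact
  have : Finite {k : Fin d → ℤ | normInf k ≤ m} := (finite_setOf_normInf_le d m).to_subtype
  obtain ⟨I, hI⟩ := (show Continuous fun (x : X) (k : {k : Fin d → ℤ | normInf k ≤ m}) =>
    (Φ x).1 k from continuous_pi fun k =>
      (continuous_apply k.1).comp (continuous_subtype_val.comp hΦ)).exists_finset_eq_of_eqOn
  refine ⟨max m (I.sup normInf), le_max_left _ _, fun x y hxy k hk => ?_⟩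
  have hIN : (I : Set (Fin d → ℤ)) ⊆ {k | normInf k ≤ max m (I.sup normInf)} :=
    fun i hi => show normInf i ≤ _ from (Finset.le_sup hi).trans (le_max_right _ _)
  exact congrFun (hI x y (hxy.mono hIN)) ⟨k, hk⟩

lemma exists_forall_ge_eqOn_box {d : ℕ} {A : Type*} [Finite A] [TopologicalSpace A]
    [DiscreteTopology A] {X : Set (Config d A)} (hX : IsClosed X) {Φ : X → X}
    (hΦ : Continuous Φ) {m : ℕ}
    (hfix : ∀ x : X, ∀ k : Fin d → ℤ, m < normInf k → (Φ x).1 k = x.1 k) :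
    ∃ N, m ≤ N ∧ ∀ n, N ≤ n → ∀ x y : X, Set.EqOn x.1 y.1 {k | normInf k ≤ n} →
      Set.EqOn (Φ x).1 (Φ y).1 {k | normInf k ≤ n} := by
  obtain ⟨N, hmN, hN⟩ := exists_eqOn_box_of_continuous hX hΦ m
  refine ⟨N, hmN, fun n hNn x y hxy k hk => ?_⟩
  by_cases hkm : normInf k ≤ m
  · exact hN x y (hxy.mono fun i (hi : normInf i ≤ N) => hi.trans hNn) hkm
  · rw [hfix x k (by omega), hfix y k (by omega)]
    exact hxy hk

theorem memF_uniform_general {d : ℕ} {A : Type*} [Fintype A]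
    [TopologicalSpace A] [DiscreteTopology A]
    (X : Set (Config d A)) (hcl : IsClosed X)
    (φ : ↥X ≃ₜ ↥X) (hφ : memF X φ) :
    ∃ n : ℕ, 1 ≤ n ∧
      (∀ x : ↥X, ∀ k : Fin d → ℤ, n < normInf k → (φ x).1 k = x.1 k) ∧
      (∀ x y : ↥X,
        ((∀ k : Fin d → ℤ, normInf k ≤ n → x.1 k = y.1 k) ↔
          (∀ k : Fin d → ℤ, normInf k ≤ n → (φ x).1 k = (φ y).1 k))) := by
  obtain ⟨m, hm, hfix⟩ := hφ
  have hfix_symm : ∀ x : X, ∀ k : Fin d → ℤ, m < normInf k → (φ.symm x).1 k = x.1 k :=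
    fun x k hk => by simpa using (hfix (φ.symm x) k hk).symm
  obtain ⟨N₁, hmN₁, h₁⟩ := exists_forall_ge_eqOn_box hcl φ.continuous hfix
  obtain ⟨N₂, -, h₂⟩ := exists_forall_ge_eqOn_box hcl φ.symm.continuous hfix_symm
  refine ⟨max N₁ N₂, by omega, fun x k hk => hfix x k (by omega), fun x y => ⟨?_, ?_⟩⟩
  · exact fun h => h₁ _ (le_max_left _ _) x y fun i => h i
  · intro h k hk
    simpa using h₂ _ (le_max_right _ _) (φ x) (φ y) (fun i => h i) hk

/-- For every `φ ∈ 𝓕(X)` there is `n ≥ 1` such that (a) `φ(x)` agrees with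
`x` off `Λ_n` for every `x ∈ X`, and (b) `x_{Λ_n} = y_{Λ_n}` iff `φ(x)_{Λ_n} = φ(y)_{Λ_n}`. -/
theorem memF_uniform {d : ℕ} (hd : 1 ≤ d) {A : Type*} [Fintype A] [Nonempty A]
    [TopologicalSpace A] [DiscreteTopology A]
    (X : Set (Config d A)) (hne : X.Nonempty) (hcl : IsClosed X)
    (hinv : ∀ k : Fin d → ℤ, ∀ x ∈ X, shift k x ∈ X)
    (φ : ↥X ≃ₜ ↥X) (hφ : memF X φ) :
    ∃ n : ℕ, 1 ≤ n ∧
      (∀ x : ↥X, ∀ k : Fin d → ℤ, n < normInf k → (φ x).1 k = x.1 k) ∧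
      (∀ x y : ↥X,
        ((∀ k : Fin d → ℤ, normInf k ≤ n → x.1 k = y.1 k) ↔
          (∀ k : Fin d → ℤ, normInf k ≤ n → (φ x).1 k = (φ y).1 k))) :=
  memF_uniform_general X hcl φ hφ
end
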